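/- Let R be a subring of the ring of rational numbers. A map of spectra which is both an R-equivalence and an R-fibration is a stable equivalence and a stable fibration (i.e. an acyclic fibration in the Bousfield–Friedlander stable model structure); consequently it has the right lifting property with respect to all cofibrations. -/

import Mathlib

open CategoryTheory CategoryTheory.Limits

universe u

noncomputable section

/-- `f` is a retract of `g`: there are morphisms exhibiting the square of `f` as a
retract of the square of `g`. -/
structure RetractOf {C : Type u} [Category.{u} C] {X Y X' Y' : C}
    (f : X ⟶ Y) (g : X' ⟶ Y') : Type u where
  iX : X ⟶ X'
  rX : X' ⟶ X
  iY : Y ⟶ Y'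
  rY : Y' ⟶ Y
  retract_left : iX ≫ rX = 𝟙 X
  retract_right : iY ≫ rY = 𝟙 Y
  comm_top : iX ≫ g = f ≫ iY
  comm_bot : g ≫ rY = rX ≫ f

/-- A (Quillen closed) model structure on a category `C`: classes of weak equivalences,
cofibrations and fibrations satisfying the model category axioms MC2–MC5
(MC1, bicompleteness, is imposed separately). -/
structure ModelStructure (C : Type u) [Category.{u} C] where
  we : MorphismProperty C
  cof : MorphismProperty C
  fib : MorphismProperty C
  we_of_iso : ∀ {X Y : C} (f : X ⟶ Y), IsIso f → we f
  we_comp : ∀ {X Y Z : C} (f : X ⟶ Y) (g : Y ⟶ Z), we f → we g → we (f ≫ g)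
  we_of_comp_left : ∀ {X Y Z : C} (f : X ⟶ Y) (g : Y ⟶ Z), we g → we (f ≫ g) → we f
  we_of_comp_right : ∀ {X Y Z : C} (f : X ⟶ Y) (g : Y ⟶ Z), we f → we (f ≫ g) → we g
  we_retract : ∀ {X Y X' Y' : C} {f : X ⟶ Y} {g : X' ⟶ Y'}, RetractOf f g → we g → we f
  cof_retract : ∀ {X Y X' Y' : C} {f : X ⟶ Y} {g : X' ⟶ Y'}, RetractOf f g → cof g → cof f
  fib_retract : ∀ {X Y X' Y' : C} {f : X ⟶ Y} {g : X' ⟶ Y'}, RetractOf f g → fib g → fib f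
  lifting_acof_fib : ∀ {A B X Y : C} (i : A ⟶ B) (p : X ⟶ Y), cof i → we i → fib p →
    HasLiftingProperty i p
  lifting_cof_afib : ∀ {A B X Y : C} (i : A ⟶ B) (p : X ⟶ Y), cof i → fib p → we p →
    HasLiftingProperty i p
  factor_acof_fib : ∀ {X Y : C} (f : X ⟶ Y), ∃ (Z : C) (i : X ⟶ Z) (p : Z ⟶ Y),
    cof i ∧ we i ∧ fib p ∧ i ≫ p = f
  factor_cof_afib : ∀ {X Y : C} (f : X ⟶ Y), ∃ (Z : C) (i : X ⟶ Z) (p : Z ⟶ Y),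
    cof i ∧ fib p ∧ we p ∧ i ≫ p = f

/-- An object is cofibrant if the map from the initial object is a cofibration. -/
def ModelStructure.Cofibrant {C : Type u} [Category.{u} C] [HasInitial C]
    (M : ModelStructure C) (X : C) : Prop :=
  M.cof (initial.to X)

/-- An object is fibrant if the map to the terminal object is a fibration. -/
def ModelStructure.Fibrant {C : Type u} [Category.{u} C] [HasTerminal C]
    (M : ModelStructure C) (X : C) : Prop :=
  M.fib (terminal.from X)

/-- The homotopy category of a model structure: the localization of the underlying
category at the class of weak equivalences. -/
abbrev ModelStructure.Ho {C : Type u} [Category.{u} C] (M : ModelStructure C) :=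
  M.we.Localization
/-- An additive map `f : A →+ B` induces an isomorphism after tensoring with the
subring `R ⊆ ℚ`, i.e. `R ⊗ f : R ⊗ A → R ⊗ B` is bijective. -/
def IsRTensorIso (R : Subring ℚ) {A B : Type u} [AddCommGroup A] [AddCommGroup B]
    (f : A →+ B) : Prop :=
  Function.Bijective (LinearMap.lTensor (↥R) f.toIntLinearMap)

/-- An abelian group is `R`-local (for `R ⊆ ℚ`) if it admits an `R`-module structure
compatible with its `ℤ`-module structure. -/
def IsRLocalGroup (R : Subring ℚ) (A : Type u) [AddCommGroup A] : Prop :=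
  ∃ m : Module (↥R) A, ∀ (n : ℤ) (a : A), (letI := m; ((n : ↥R) • a)) = n • a
/-- The Bousfield–Friedlander category of spectra, together with its basic
homotopy-theoretic structure: spectra are sequences of pointed simplicial sets with
structure maps `S¹ ∧ Xₙ → Xₙ₊₁`; `pi n` are the stable homotopy group functors
`π_n X = colim_i π_{i+n}|X_i|`; `cof` are the cofibrations (levelwise "injective"
maps in the Bousfield–Friedlander sense); `levelFib`/`levelWe` are the level
fibrations and level equivalences; `isOmega` singles out the Ω-spectra; `sphere` is
the sphere spectrum; and `stable` is the Bousfield–Friedlander stable model structure,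
whose weak equivalences are the π₊-isomorphisms, whose cofibrations are `cof`, and
whose fibrations are characterized by the right lifting property against acyclic
cofibrations. -/
structure SpectraData : Type (u + 1) where
  Sp : Type u
  [cat : Category.{u} Sp]
  [hz : HasZeroObject Sp]
  [hl : HasLimits Sp]
  [hc : HasColimits Sp]
  /-- the homotopy group functors `π_n` -/
  pi : ℤ → Sp ⥤ AddCommGrpCat.{u}
  /-- cofibrations of spectra -/
  cof : MorphismProperty Sp
  /-- level fibrations -/
  levelFib : MorphismProperty Sp
  /-- level equivalences -/
  levelWe : MorphismProperty Sp
  /-- the property of being an Ω-spectrum -/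
  isOmega : Sp → Prop
  /-- the sphere spectrum -/
  sphere : Sp
  /-- the Bousfield–Friedlander stable model structure -/
  stable : ModelStructure Sp
  stable_cof : stable.cof = cof
  stable_we : ∀ {X Y : Sp} (f : X ⟶ Y), stable.we f ↔
    ∀ n : ℤ, Function.Bijective ((pi n).map f)
  stable_fib : ∀ {X Y : Sp} (f : X ⟶ Y), stable.fib f ↔
    ∀ {A B : Sp} (i : A ⟶ B), cof i → stable.we i → HasLiftingProperty i f
  /-- the stable acyclic fibrations are exactly the level acyclic fibrations -/
  acyclic_fib_iff_level : ∀ {X Y : Sp} (f : X ⟶ Y),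
    (stable.fib f ∧ stable.we f) ↔ (levelFib f ∧ levelWe f)
  /-- level equivalences are stable equivalences -/
  stable_we_of_levelWe : ∀ {X Y : Sp} (f : X ⟶ Y), levelWe f → stable.we f
  /-- stable fibrations are level fibrations -/
  levelFib_of_stable_fib : ∀ {X Y : Sp} (f : X ⟶ Y), stable.fib f → levelFib f
  /-- the stably fibrant objects are exactly the Ω-spectra -/
  fibrant_iff_isOmega : ∀ X : Sp, stable.Fibrant X ↔ isOmega X
  /-- the sphere spectrum is cofibrant -/
  sphere_cofibrant : stable.Cofibrant sphere

attribute [instance] SpectraData.cat SpectraData.hz SpectraData.hl SpectraData.hc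

/-- A map of spectra is an `R`-equivalence if it induces isomorphisms on homotopy
groups after tensoring with `R`. -/
def SpectraData.REq (S : SpectraData.{u}) (R : Subring ℚ) : MorphismProperty S.Sp :=
  fun _ _ f => ∀ n : ℤ, IsRTensorIso R ((S.pi n).map f).hom

/-- A map of spectra is an `R`-fibration if it has the right lifting property with
respect to all maps that are both cofibrations and `R`-equivalences. -/
def SpectraData.RFib (S : SpectraData.{u}) (R : Subring ℚ) : MorphismProperty S.Sp :=
  fun _ _ f => ∀ {A B : S.Sp} (i : A ⟶ B), S.cof i → S.REq R i → HasLiftingProperty i f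

/-!
Factor `f = i ≫ p` with `i` a cofibration and `p` a stable acyclic fibration. Stable
equivalences are `R`-equivalences, so `i` is an `R`-equivalence by two-out-of-three; as `f` is an
`R`-fibration it lifts against `i`, which makes `f` a retract of `p` (the retract argument).
Hence `f` is a stable acyclic fibration and lifts against every cofibration.
-/

namespace IsRTensorIso

variable (R : Subring ℚ) {A B C : Type u} [AddCommGroup A] [AddCommGroup B] [AddCommGroup C]

lemma of_bijective {f : A →+ B} (hf : Function.Bijective f) : IsRTensorIso R f := by
  let e : A ≃ₗ[ℤ] B := LinearEquiv.ofBijective f.toIntLinearMap hf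
  have he : LinearMap.lTensor R f.toIntLinearMap = (e.lTensor R : _ →ₗ[ℤ] _) := rfl
  unfold IsRTensorIso
  rw [he]
  exact (e.lTensor R).bijective

variable {R} in
lemma of_comp {f : A →+ B} {g : B →+ C} (hg : IsRTensorIso R g)
    (hgf : IsRTensorIso R (g.comp f)) : IsRTensorIso R f := by
  have hcomp : LinearMap.lTensor R (g.comp f).toIntLinearMap =
      (LinearMap.lTensor R g.toIntLinearMap).comp (LinearMap.lTensor R f.toIntLinearMap) := by
    rw [← LinearMap.lTensor_comp]; rfl
  unfold IsRTensorIso at hgf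
  rw [hcomp, LinearMap.coe_comp] at hgf
  exact (Function.Bijective.of_comp_iff' hg _).mp hgf

end IsRTensorIso

def RetractOf.ofRetractArrow {C : Type u} [Category.{u} C] {X Y X' Y' : C}
    {f : X ⟶ Y} {g : X' ⟶ Y'} (h : RetractArrow f g) : RetractOf f g where
  iX := h.i.left
  rX := h.r.left
  iY := h.i.right
  rY := h.r.right
  retract_left := h.retract_left
  retract_right := h.retract_right
  comm_top := h.i_w
  comm_bot := h.r_w.symm

lemma ModelStructure.fib_and_we_of_hasLiftingProperty {C : Type u} [Category.{u} C]
    (M : ModelStructure C) {X Y Z : C} {f : X ⟶ Z} {i : X ⟶ Y} {p : Y ⟶ Z} (hfac : i ≫ p = f)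
    [HasLiftingProperty i f] (hp : M.fib p) (hp' : M.we p) : M.fib f ∧ M.we f :=
  let h := RetractOf.ofRetractArrow (RetractArrow.ofRightLiftingProperty hfac)
  ⟨M.fib_retract h hp, M.we_retract h hp'⟩

namespace SpectraData

variable (S : SpectraData.{u}) {R : Subring ℚ}

lemma rEq_of_stable_we {X Y : S.Sp} {f : X ⟶ Y} (hf : S.stable.we f) : S.REq R f :=
  fun n => IsRTensorIso.of_bijective R ((S.stable_we f).mp hf n)

variable {S} in
lemma REq.of_comp {X Y Z : S.Sp} {i : X ⟶ Y} {p : Y ⟶ Z} (hp : S.REq R p)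
    (hip : S.REq R (i ≫ p)) : S.REq R i := fun n =>
  (hp n).of_comp (by simpa only [Functor.map_comp, AddCommGrpCat.hom_comp] using hip n)

end SpectraData

/-- **`R`-local acyclic fibrations are stable acyclic fibrations** (claim (b) in
Section 4). A map of spectra which is both an `R`-equivalence and an `R`-fibration is a
stable equivalence and a stable fibration; consequently it has the right lifting
property with respect to all cofibrations. -/
theorem stable_acyclic_fib_of_rEq_rFib (S : SpectraData.{u}) (R : Subring ℚ)
    {X Y : S.Sp} (f : X ⟶ Y) (h₁ : S.REq R f) (h₂ : S.RFib R f) :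
    (S.stable.we f ∧ S.stable.fib f) ∧
      ∀ {A B : S.Sp} (i : A ⟶ B), S.cof i → HasLiftingProperty i f := by
  obtain ⟨Z, i, p, hi_cof, hp_fib, hp_we, hfac⟩ := S.stable.factor_cof_afib f
  have hi_REq : S.REq R i := (S.rEq_of_stable_we hp_we).of_comp (hfac ▸ h₁)
  have : HasLiftingProperty i f := h₂ i (S.stable_cof ▸ hi_cof) hi_REq
  obtain ⟨hf_fib, hf_we⟩ := S.stable.fib_and_we_of_hasLiftingProperty hfac hp_fib hp_we
  exact ⟨⟨hf_we, hf_fib⟩,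
    fun j hj => S.stable.lifting_cof_afib j f (S.stable_cof ▸ hj) hf_fib hf_we⟩
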